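/- arXiv:1006.3408 — 5 statements merged into one kernel-verified Lean document; each statement's English description precedes it below -/
import Mathlib

section
/- For positive reals a, b, the complete elliptic-type integral ∫₀^{π/2} dφ / √(a² cos²φ + b² sin²φ) equals π / (2 M(a,b)), where M(a,b) is the arithmetic–geometric mean of a and b. -/
/-!
The substitution `x = b tan φ` turns the trigonometric integral `I(a, b)` into
`J(a, b) = ∫₀^∞ dx / √((x² + a²)(x² + b²))`, and Gauss's substitution `x = (t - ab/t)/2`, which
maps `(0, ∞)` onto `ℝ`, shows `J((a + b)/2, √(ab)) = J(a, b)`. Hence `I` is constant along the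
AGM sequence. Since `π / (2 max(a, b)) ≤ I(a, b) ≤ π / (2 min(a, b))` and both AGM sequences
converge to `M(a, b)`, the constant value is `π / (2 M(a, b))`.
-/

open Filter Topology Real Set MeasureTheory

noncomputable def ellipticTrigIntegral (a b : ℝ) : ℝ :=
  ∫ φ in (0:ℝ)..(π / 2), (√(a ^ 2 * cos φ ^ 2 + b ^ 2 * sin φ ^ 2))⁻¹

noncomputable def ellipticAlgIntegral (a b : ℝ) : ℝ :=
  ∫ x in Ioi (0:ℝ), (√((x ^ 2 + a ^ 2) * (x ^ 2 + b ^ 2)))⁻¹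

lemma image_const_mul_tan_Ioo {b : ℝ} (hb : 0 < b) :
    (fun φ => b * tan φ) '' Ioo 0 (π / 2) = Ioi 0 := by
  ext y
  constructor
  · rintro ⟨φ, hφ, rfl⟩
    exact mul_pos hb (tan_pos_of_pos_of_lt_pi_div_two hφ.1 hφ.2)
  · intro hy
    refine ⟨arctan (y / b), ⟨?_, arctan_lt_pi_div_two _⟩, ?_⟩
    · simpa using arctan_strictMono (div_pos hy hb)
    · simp only [tan_arctan]
      field_simp

lemma ellipticTrigIntegral_eq_ellipticAlgIntegral {a b : ℝ} (hb : 0 < b) :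
    ellipticTrigIntegral a b = ellipticAlgIntegral a b := by
  have hcos : ∀ φ ∈ Ioo 0 (π / 2), 0 < cos φ := fun φ hφ =>
    cos_pos_of_mem_Ioo ⟨by linarith [hφ.1, pi_div_two_pos], hφ.2⟩
  have hderiv : ∀ φ ∈ Ioo 0 (π / 2),
      HasDerivWithinAt (fun φ => b * tan φ) (b / cos φ ^ 2) (Ioo 0 (π / 2)) φ := fun φ hφ => by
    simpa [div_eq_mul_inv] using ((hasDerivAt_tan (hcos φ hφ).ne').const_mul b).hasDerivWithinAt
  have hinj : InjOn (fun φ => b * tan φ) (Ioo 0 (π / 2)) := fun x hx y hy hxy =>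
    strictMonoOn_tan.injOn ⟨by linarith [hx.1, pi_div_two_pos], hx.2⟩
      ⟨by linarith [hy.1, pi_div_two_pos], hy.2⟩ (mul_left_cancel₀ hb.ne' hxy)
  rw [ellipticAlgIntegral, ← image_const_mul_tan_Ioo hb,
    integral_image_eq_integral_abs_deriv_smul measurableSet_Ioo hderiv hinj,
    ellipticTrigIntegral, intervalIntegral.integral_of_le (by positivity),
    integral_Ioc_eq_integral_Ioo]
  refine setIntegral_congr_fun measurableSet_Ioo fun φ hφ => ?_
  have hc := hcos φ hφ
  have hs : 0 < sin φ := sin_pos_of_pos_of_lt_pi hφ.1 (by linarith [hφ.2, pi_pos])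
  have hjac : 0 < b / cos φ ^ 2 := by positivity
  have hX : 0 < a ^ 2 * cos φ ^ 2 + b ^ 2 * sin φ ^ 2 := by positivity
  have hprod : ((b * tan φ) ^ 2 + a ^ 2) * ((b * tan φ) ^ 2 + b ^ 2)
      = (a ^ 2 * cos φ ^ 2 + b ^ 2 * sin φ ^ 2) * (b / cos φ ^ 2) ^ 2 := by
    rw [tan_eq_sin_div_cos]
    field_simp
    linear_combination (a ^ 2 * cos φ ^ 2 + b ^ 2 * sin φ ^ 2) * sin_sq_add_cos_sq φ
  rw [smul_eq_mul, hprod, sqrt_mul hX.le, sqrt_sq hjac.le, abs_of_pos hjac, mul_inv]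
  have := sqrt_pos.2 hX
  field_simp

noncomputable def gaussSubst (c t : ℝ) : ℝ := (t - c / t) / 2

section GaussSubst

variable {c : ℝ}

lemma image_gaussSubst_Ioi (hc : 0 < c) : gaussSubst c '' Ioi 0 = univ := by
  refine eq_univ_of_forall fun u => ?_
  have hroot : |u| < √(u ^ 2 + c) := by
    rw [← sqrt_sq_eq_abs]
    exact sqrt_lt_sqrt (sq_nonneg u) (by linarith)
  have ht : 0 < u + √(u ^ 2 + c) := by linarith [neg_abs_le u]
  refine ⟨u + √(u ^ 2 + c), ht, ?_⟩
  have := sq_sqrt (show 0 ≤ u ^ 2 + c by positivity)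
  rw [gaussSubst]
  field_simp
  nlinarith

lemma strictMonoOn_gaussSubst (hc : 0 ≤ c) : StrictMonoOn (gaussSubst c) (Ioi 0) := by
  intro x hx y hy hxy
  have : c / y ≤ c / x := div_le_div_of_nonneg_left hc hx hxy.le
  simp only [gaussSubst]
  linarith

lemma hasDerivAt_gaussSubst {t : ℝ} (ht : t ≠ 0) :
    HasDerivAt (gaussSubst c) ((1 + c / t ^ 2) / 2) t :=
  (((hasDerivAt_id t).sub ((hasDerivAt_inv ht).const_mul c)).div_const 2).congr_deriv (by ring)

end GaussSubst

lemma ellipticAlgIntegral_agm_step {a b : ℝ} (ha : 0 < a) (hb : 0 < b) :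
    ellipticAlgIntegral ((a + b) / 2) √(a * b) = ellipticAlgIntegral a b := by
  set g : ℝ → ℝ := fun x => (√((x ^ 2 + ((a + b) / 2) ^ 2) * (x ^ 2 + √(a * b) ^ 2)))⁻¹
  have hab : 0 < a * b := mul_pos ha hb
  have hsubst := integral_image_eq_integral_abs_deriv_smul measurableSet_Ioi
    (fun t ht => (hasDerivAt_gaussSubst (ne_of_gt ht)).hasDerivWithinAt)
    (strictMonoOn_gaussSubst hab.le).injOn g
  rw [image_gaussSubst_Ioi hab, setIntegral_univ] at hsubst
  have hlhs : ∫ x, g x = 2 * ellipticAlgIntegral ((a + b) / 2) √(a * b) := by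
    rw [ellipticAlgIntegral, ← integral_comp_abs]
    simp only [g, sq_abs]
  have hrhs : ∫ t in Ioi 0, |(1 + a * b / t ^ 2) / 2| • g (gaussSubst (a * b) t)
      = 2 * ellipticAlgIntegral a b := by
    rw [ellipticAlgIntegral, ← integral_const_mul]
    refine setIntegral_congr_fun measurableSet_Ioi fun t (ht : 0 < t) => ?_
    have hjac : 0 < (1 + a * b / t ^ 2) / 2 := by positivity
    -- with `x = (t² - ab)/2t`: `x² + ((a+b)/2)² = (t²+a²)(t²+b²)/4t²` and `x² + ab = ((t²+ab)/2t)²`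
    have hprod : (gaussSubst (a * b) t ^ 2 + ((a + b) / 2) ^ 2) *
          (gaussSubst (a * b) t ^ 2 + √(a * b) ^ 2)
        = ((t ^ 2 + a ^ 2) * (t ^ 2 + b ^ 2)) * ((1 + a * b / t ^ 2) / 2 / 2) ^ 2 := by
      rw [sq_sqrt hab.le, gaussSubst]
      field_simp
      ring
    have := sqrt_pos.2 (show 0 < (t ^ 2 + a ^ 2) * (t ^ 2 + b ^ 2) by positivity)
    simp only [smul_eq_mul, g]
    rw [hprod, sqrt_mul (by positivity), sqrt_sq (by positivity), abs_of_pos hjac]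
    field_simp
  linarith

lemma sq_min_le_and_le_sq_max {a b : ℝ} (ha : 0 ≤ a) (hb : 0 ≤ b) (φ : ℝ) :
    min a b ^ 2 ≤ a ^ 2 * cos φ ^ 2 + b ^ 2 * sin φ ^ 2 ∧
      a ^ 2 * cos φ ^ 2 + b ^ 2 * sin φ ^ 2 ≤ max a b ^ 2 := by
  have hmin_a : min a b ^ 2 ≤ a ^ 2 := pow_le_pow_left₀ (le_min ha hb) (min_le_left a b) 2
  have hmin_b : min a b ^ 2 ≤ b ^ 2 := pow_le_pow_left₀ (le_min ha hb) (min_le_right a b) 2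
  have hmax_a : a ^ 2 ≤ max a b ^ 2 := pow_le_pow_left₀ ha (le_max_left a b) 2
  have hmax_b : b ^ 2 ≤ max a b ^ 2 := pow_le_pow_left₀ hb (le_max_right a b) 2
  have hc := sq_nonneg (cos φ)
  have hs := sq_nonneg (sin φ)
  constructor <;> nlinarith [sin_sq_add_cos_sq φ]

lemma ellipticTrigIntegral_mem_Icc {a b : ℝ} (ha : 0 < a) (hb : 0 < b) :
    ellipticTrigIntegral a b ∈ Icc (π / 2 / max a b) (π / 2 / min a b) := by
  have hmin : 0 < min a b := lt_min ha hb
  have hX φ : 0 < a ^ 2 * cos φ ^ 2 + b ^ 2 * sin φ ^ 2 :=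
    (pow_pos hmin 2).trans_le (sq_min_le_and_le_sq_max ha.le hb.le φ).1
  have hint : IntervalIntegrable (fun φ => (√(a ^ 2 * cos φ ^ 2 + b ^ 2 * sin φ ^ 2))⁻¹)
      volume 0 (π / 2) :=
    (Continuous.inv₀ (by fun_prop) fun φ => (sqrt_pos.2 (hX φ)).ne').intervalIntegrable _ _
  have hbounds φ : (max a b)⁻¹ ≤ (√(a ^ 2 * cos φ ^ 2 + b ^ 2 * sin φ ^ 2))⁻¹ ∧
      (√(a ^ 2 * cos φ ^ 2 + b ^ 2 * sin φ ^ 2))⁻¹ ≤ (min a b)⁻¹ := by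
    obtain ⟨hlo, hhi⟩ := sq_min_le_and_le_sq_max ha.le hb.le φ
    constructor
    · refine inv_anti₀ (sqrt_pos.2 (hX φ)) ?_
      simpa [sqrt_sq (ha.le.trans (le_max_left a b))] using sqrt_le_sqrt hhi
    · refine inv_anti₀ hmin ?_
      simpa [sqrt_sq hmin.le] using sqrt_le_sqrt hlo
  have hπ : (0:ℝ) ≤ π / 2 := by positivity
  constructor
  · simpa [ellipticTrigIntegral, div_eq_mul_inv] using
      intervalIntegral.integral_mono_on hπ intervalIntegrable_const hint fun φ _ => (hbounds φ).1
  · simpa [ellipticTrigIntegral, div_eq_mul_inv] using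
      intervalIntegral.integral_mono_on hπ hint intervalIntegrable_const fun φ _ => (hbounds φ).2

lemma min_le_min_add_div_two_sqrt_mul {x y : ℝ} (hx : 0 ≤ x) (hy : 0 ≤ y) :
    min x y ≤ min ((x + y) / 2) √(x * y) := by
  refine le_min (by linarith [min_le_left x y, min_le_right x y]) (le_sqrt_of_sq_le ?_)
  calc min x y ^ 2 = min x y * min x y := sq _
    _ ≤ x * y := mul_le_mul (min_le_left x y) (min_le_right x y) (le_min hx hy) hx

section AGM

variable {A B : ℕ → ℝ}

lemma min_le_min_agm (hA : ∀ n, A (n + 1) = (A n + B n) / 2) (hB : ∀ n, B (n + 1) = √(A n * B n))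
    (h0 : 0 ≤ min (A 0) (B 0)) (n : ℕ) : min (A 0) (B 0) ≤ min (A n) (B n) := by
  induction n with
  | zero => rfl
  | succ n ih =>
    have hn := h0.trans ih
    rw [hA, hB]
    exact ih.trans (min_le_min_add_div_two_sqrt_mul (hn.trans (min_le_left _ _))
      (hn.trans (min_le_right _ _)))

lemma agm_invariant {F : ℝ → ℝ → ℝ} (hF : ∀ x y, 0 < x → 0 < y → F ((x + y) / 2) √(x * y) = F x y)
    (hA : ∀ n, A (n + 1) = (A n + B n) / 2) (hB : ∀ n, B (n + 1) = √(A n * B n))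
    (hpos : ∀ n, 0 < A n ∧ 0 < B n) (n : ℕ) : F (A n) (B n) = F (A 0) (B 0) := by
  induction n with
  | zero => rfl
  | succ n ih => rw [hA, hB, hF _ _ (hpos n).1 (hpos n).2, ih]

end AGM

lemma ellipticTrigIntegral_agm_step {a b : ℝ} (ha : 0 < a) (hb : 0 < b) :
    ellipticTrigIntegral ((a + b) / 2) √(a * b) = ellipticTrigIntegral a b := by
  rw [ellipticTrigIntegral_eq_ellipticAlgIntegral (sqrt_pos.2 (mul_pos ha hb)),
    ellipticAlgIntegral_agm_step ha hb, ellipticTrigIntegral_eq_ellipticAlgIntegral hb]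

/-- Gauss: the complete elliptic integral equals `π / (2 M(a,b))` where
`M(a,b)` is the arithmetic–geometric mean of `a, b > 0`. -/
theorem gauss_agm_elliptic_integral (a b : ℝ) (ha : 0 < a) (hb : 0 < b)
    (A B : ℕ → ℝ) (hA0 : A 0 = a) (hB0 : B 0 = b)
    (hA : ∀ n, A (n + 1) = (A n + B n) / 2)
    (hB : ∀ n, B (n + 1) = Real.sqrt (A n * B n))
    (M : ℝ) (hMA : Tendsto A atTop (𝓝 M)) (hMB : Tendsto B atTop (𝓝 M)) :
    ∫ φ in (0:ℝ)..(π / 2),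
        1 / Real.sqrt (a ^ 2 * Real.cos φ ^ 2 + b ^ 2 * Real.sin φ ^ 2)
      = π / (2 * M) := by
  subst hA0 hB0
  have hmin_lim : Tendsto (fun n => min (A n) (B n)) atTop (𝓝 M) := by
    simpa using hMA.min hMB
  have hmax_lim : Tendsto (fun n => max (A n) (B n)) atTop (𝓝 M) := by
    simpa using hMA.max hMB
  have hmin0 : 0 < min (A 0) (B 0) := lt_min ha hb
  have hmin := min_le_min_agm hA hB hmin0.le
  have hpos n : 0 < A n ∧ 0 < B n := lt_min_iff.1 (hmin0.trans_le (hmin n))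
  have hM : 0 < M := hmin0.trans_le (ge_of_tendsto' hmin_lim hmin)
  have hbounds n : ellipticTrigIntegral (A 0) (B 0) ∈
      Icc (π / 2 / max (A n) (B n)) (π / 2 / min (A n) (B n)) :=
    agm_invariant (fun x y hx hy => ellipticTrigIntegral_agm_step hx hy) hA hB hpos n ▸
      ellipticTrigIntegral_mem_Icc (hpos n).1 (hpos n).2
  have hlim : Tendsto (fun _ : ℕ => ellipticTrigIntegral (A 0) (B 0)) atTop (𝓝 (π / 2 / M)) :=
    tendsto_of_tendsto_of_tendsto_of_le_of_le (tendsto_const_nhds.div hmax_lim hM.ne')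
      (tendsto_const_nhds.div hmin_lim hM.ne') (fun n => (hbounds n).1) (fun n => (hbounds n).2)
  simp only [one_div]
  rw [← ellipticTrigIntegral, tendsto_const_nhds_iff.1 hlim]
  ring
end

section
/- The map π given by π(ζ, η) = (η/ζ, β(ζ³ + 1/ζ³)) sends any point (ζ, η) with ζ ≠ 0 satisfying η³ + α η ζ² + β ζ⁶ + γ ζ³ − β = 0 to a point (x, y) satisfying y² = (x³ + α x + γ)² + 4β². -/
/-! Dividing the curve equation by `ζ³` gives `x³ + αx + γ = β(ζ⁻³ - ζ³)` at `x = η/ζ`, and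
`(s + t)² - (t - s)² = 4st = 4` for `s = ζ³`, `t = ζ⁻³`. -/

theorem cubic_div_eq_of_spectral_curve {K : Type*} [Field K] {α β γ ζ η : K} (hζ : ζ ≠ 0)
    (hcurve : η ^ 3 + α * η * ζ ^ 2 + β * ζ ^ 6 + γ * ζ ^ 3 - β = 0) :
    (η / ζ) ^ 3 + α * (η / ζ) + γ = β * (1 / ζ ^ 3 - ζ ^ 3) := by
  field_simp
  linear_combination hcurve

/-- The quotient map `π(ζ,η) = (η/ζ, β(ζ³ + 1/ζ³))` sends the cyclic
charge-3 spectral curve to the quotient curve. -/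
theorem quotient_map_to_genus2 (α β γ : ℂ) (ζ η : ℂ) (hζ : ζ ≠ 0)
    (hcurve : η ^ 3 + α * η * ζ ^ 2 + β * ζ ^ 6 + γ * ζ ^ 3 - β = 0) :
    (β * (ζ ^ 3 + 1 / ζ ^ 3)) ^ 2
      = ((η / ζ) ^ 3 + α * (η / ζ) + γ) ^ 2 + 4 * β ^ 2 := by
  have hinv : ζ ^ 3 * (1 / ζ ^ 3) = 1 := mul_one_div_cancel (pow_ne_zero 3 hζ)
  rw [cubic_div_eq_of_spectral_curve hζ hcurve]
  linear_combination (4 * β ^ 2) * hinv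
end

section
/- For quadratics P(x) = (x−a)(x−a'), Q(x) = (x−b)(x−b'), R(x) = (x−c)(x−c') with real roots a < a' < b < b' < c < c', the Richelot polynomials U = [Q,R], V = [R,P], W = [P,Q], where [f,g] = f' g − g' f, each have two real roots. -/
/-! At a root `r` of `P` the bracket `[P,Q]` reduces to `P'(r) Q(r)`, and at a root of `Q` to
`-Q'(r) P(r)`. Between the two roots of `P` the quadratic `Q` keeps its sign while `P'` takes
opposite signs at them, so `[P,Q]` changes sign on `(a, a')`; likewise on `(b, b')`. The
intermediate value theorem gives a root of `[P,Q]` in each of these disjoint intervals. -/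

theorem deriv_eq_of_eq_mul_sub {P : ℝ → ℝ} {p p' : ℝ} (hP : ∀ x, P x = (x - p) * (x - p'))
    (x : ℝ) : deriv P x = 2 * x - p - p' := by
  obtain rfl : P = fun x => (x - p) * (x - p') := funext hP
  have := ((hasDerivAt_id' x).sub_const p).fun_mul ((hasDerivAt_id' x).sub_const p')
  rw [this.deriv]; ring

/-- `quadBracket p p' q q'` is `[P,Q]` for `P = (x - p)(x - p')` and `Q = (x - q)(x - q')`. -/
def quadBracket (p p' q q' x : ℝ) : ℝ :=
  (2 * x - p - p') * ((x - q) * (x - q')) - (2 * x - q - q') * ((x - p) * (x - p'))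

theorem bracket_eq_quadBracket {P Q : ℝ → ℝ} {p p' q q' : ℝ}
    (hP : ∀ x, P x = (x - p) * (x - p')) (hQ : ∀ x, Q x = (x - q) * (x - q')) (x : ℝ) :
    deriv P x * Q x - deriv Q x * P x = quadBracket p p' q q' x := by
  rw [deriv_eq_of_eq_mul_sub hP, deriv_eq_of_eq_mul_sub hQ, hP, hQ, quadBracket]

theorem quadBracket_swap (p p' q q' x : ℝ) :
    quadBracket q q' p p' x = -quadBracket p p' q q' x := by
  unfold quadBracket; ring

theorem continuous_quadBracket (p p' q q' : ℝ) : Continuous (quadBracket p p' q q') := by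
  unfold quadBracket; fun_prop

theorem exists_ne_quadBracket_eq_zero {p p' q q' : ℝ}
    (h₁ : p < p') (h₂ : p' < q) (h₃ : q < q') :
    ∃ u u', u ≠ u' ∧ quadBracket p p' q q' u = 0 ∧ quadBracket p p' q q' u' = 0 := by
  have hcont := continuous_quadBracket p p' q q'
  have at_p : quadBracket p p' q q' p < 0 := by
    have : quadBracket p p' q q' p = (p - p') * ((p - q) * (p - q')) := by unfold quadBracket; ring
    rw [this]
    exact mul_neg_of_neg_of_pos (by linarith) (mul_pos_of_neg_of_neg (by linarith) (by linarith))
  have at_p' : 0 < quadBracket p p' q q' p' := by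
    have : quadBracket p p' q q' p' = (p' - p) * ((p' - q) * (p' - q')) := by
      unfold quadBracket; ring
    rw [this]
    exact mul_pos (by linarith) (mul_pos_of_neg_of_neg (by linarith) (by linarith))
  have at_q : 0 < quadBracket p p' q q' q := by
    have : quadBracket p p' q q' q = (q' - q) * ((q - p) * (q - p')) := by unfold quadBracket; ring
    rw [this]
    exact mul_pos (by linarith) (mul_pos (by linarith) (by linarith))
  have at_q' : quadBracket p p' q q' q' < 0 := by
    have : quadBracket p p' q q' q' = (q - q') * ((q' - p) * (q' - p')) := by
      unfold quadBracket; ring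
    rw [this]
    exact mul_neg_of_neg_of_pos (by linarith) (mul_pos (by linarith) (by linarith))
  obtain ⟨u, hu, hu0⟩ :=
    intermediate_value_Ioo h₁.le hcont.continuousOn ⟨at_p, at_p'⟩
  obtain ⟨u', hu', hu'0⟩ :=
    intermediate_value_Ioo' h₃.le hcont.continuousOn ⟨at_q', at_q⟩
  exact ⟨u, u', (hu.2.trans (h₂.trans hu'.1)).ne, hu0, hu'0⟩

/-- The Richelot polynomials `U = [Q,R]`, `V = [R,P]`, `W = [P,Q]` for
quadratics with strictly ordered real roots each have two distinct real roots. -/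
theorem richelot_real_roots (a a' b b' c c' : ℝ)
    (h1 : a < a') (h2 : a' < b) (h3 : b < b') (h4 : b' < c) (h5 : c < c')
    (P Q R U V W : ℝ → ℝ)
    (hP : ∀ x, P x = (x - a) * (x - a'))
    (hQ : ∀ x, Q x = (x - b) * (x - b'))
    (hR : ∀ x, R x = (x - c) * (x - c'))
    (hU : ∀ x, U x = deriv Q x * R x - deriv R x * Q x)
    (hV : ∀ x, V x = deriv R x * P x - deriv P x * R x)
    (hW : ∀ x, W x = deriv P x * Q x - deriv Q x * P x) :
    (∃ u u' : ℝ, u ≠ u' ∧ U u = 0 ∧ U u' = 0) ∧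
    (∃ v v' : ℝ, v ≠ v' ∧ V v = 0 ∧ V v' = 0) ∧
    (∃ w w' : ℝ, w ≠ w' ∧ W w = 0 ∧ W w' = 0) := by
  have hU' : U = quadBracket b b' c c' :=
    funext fun x => (hU x).trans (bracket_eq_quadBracket hQ hR x)
  have hV' : V = fun x => -quadBracket a a' c c' x := funext fun x =>
    (hV x).trans ((bracket_eq_quadBracket hR hP x).trans (quadBracket_swap ..))
  have hW' : W = quadBracket a a' b b' :=
    funext fun x => (hW x).trans (bracket_eq_quadBracket hP hQ x)
  obtain ⟨v, v', hvv', hv, hv'⟩ := exists_ne_quadBracket_eq_zero h1 (h2.trans (h3.trans h4)) h5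
  refine ⟨hU' ▸ exists_ne_quadBracket_eq_zero h3 h4 h5, ⟨v, v', hvv', ?_, ?_⟩,
    hW' ▸ exists_ne_quadBracket_eq_zero h1 h2 h3⟩ <;> simp [hV', hv, hv']
end

section
/- With P, Q, R quadratics with real ordered roots a < a' < b < b' < c < c' and U = [Q,R], V = [R,P], W = [P,Q], the roots u < u', v < v', w < w' of U, V, W satisfy the interlacing a ≤ v ≤ w ≤ a' ≤ b ≤ w' ≤ u ≤ b' ≤ c ≤ u' ≤ v' ≤ c'. -/
/-- A quadratic with two distinct roots factors. -/
private lemma quad_factor (A B C u u' : ℝ) (huu : u ≠ u')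
    (h1 : A * u ^ 2 + B * u + C = 0) (h2 : A * u' ^ 2 + B * u' + C = 0) (x : ℝ) :
    A * x ^ 2 + B * x + C = A * ((x - u) * (x - u')) := by
  have hd : u - u' ≠ 0 := sub_ne_zero.mpr huu
  have h3 : (u - u') * (A * (u + u') + B) = 0 := by linear_combination h1 - h2
  have hB : A * (u + u') + B = 0 := by
    rcases mul_eq_zero.mp h3 with h | h
    · exact absurd h hd
    · exact h
  have hC : C = A * u * u' := by linear_combination h1 - u * hB
  linear_combination x * hB + hC

private lemma rich_L1 {L X : ℝ} (hL : L < 0) (h : 0 < L * X) : X < 0 := by nlinarith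
private lemma rich_L2 {L X : ℝ} (hL : L < 0) (h : L * X < 0) : 0 < X := by nlinarith
private lemma rich_L3 {L X : ℝ} (hL : L < 0) (h : L * X ≤ 0) : 0 ≤ X := by nlinarith
private lemma rich_L4 {L X : ℝ} (hL : 0 < L) (h : L * X < 0) : X < 0 := by nlinarith
private lemma rich_L5 {L X : ℝ} (hL : 0 < L) (h : 0 < L * X) : 0 < X := by nlinarith
private lemma rich_L6 {L X : ℝ} (hL : 0 < L) (h : L * X ≤ 0) : X ≤ 0 := by nlinarith
private lemma rich_L8 {X Y : ℝ} (hX : X ≤ 0) (hY : Y ≤ 0) : 0 ≤ X * Y := by nlinarith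
private lemma rich_L9 {X Y : ℝ} (hX : 0 ≤ X) (hY : Y ≤ 0) : X * Y ≤ 0 := by nlinarith
private lemma rich_L7 {X Y : ℝ} (hY : 0 < Y) (h : X * Y ≤ 0) : X ≤ 0 := by nlinarith

private lemma rich_R0 {x u u' : ℝ} (huu : u < u') (h : (x - u) * (x - u') < 0) :
    u < x ∧ x < u' := ⟨by nlinarith, by nlinarith⟩
private lemma rich_R3 {x u u' : ℝ} (h : 0 < (x - u) * (x - u')) (hx : x < u') : x < u := by
  nlinarith
private lemma rich_R4 {x u u' : ℝ} (h : 0 < (x - u) * (x - u')) (hx : u < x) : u' < x := by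
  nlinarith
private lemma rich_R5 {x u u' : ℝ} (h : (x - u) * (x - u') ≤ 0) (hx : x < u') : u ≤ x := by
  nlinarith
private lemma rich_R6 {x u u' : ℝ} (h : 0 ≤ (x - u) * (x - u')) (hx : x < u') : x ≤ u := by
  nlinarith
private lemma rich_R7 {x u u' : ℝ} (h : (x - u) * (x - u') ≤ 0) (hx : u < x) : x ≤ u' := by
  nlinarith

set_option maxHeartbeats 1600000 in
/-- Interlacing of the roots of the Richelot polynomials with the roots of
`P, Q, R`. -/
theorem richelot_roots_interlace (a a' b b' c c' u u' v v' w w' : ℝ)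
    (h1 : a < a') (h2 : a' < b) (h3 : b < b') (h4 : b' < c) (h5 : c < c')
    (P Q R U V W : ℝ → ℝ)
    (hP : ∀ x, P x = (x - a) * (x - a'))
    (hQ : ∀ x, Q x = (x - b) * (x - b'))
    (hR : ∀ x, R x = (x - c) * (x - c'))
    (hU : ∀ x, U x = deriv Q x * R x - deriv R x * Q x)
    (hV : ∀ x, V x = deriv R x * P x - deriv P x * R x)
    (hW : ∀ x, W x = deriv P x * Q x - deriv Q x * P x)
    (huu : u < u') (hu : U u = 0) (hu' : U u' = 0)
    (hvv : v < v') (hv : V v = 0) (hv' : V v' = 0)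
    (hww : w < w') (hw : W w = 0) (hw' : W w' = 0) :
    a ≤ v ∧ v ≤ w ∧ w ≤ a' ∧ a' ≤ b ∧ b ≤ w' ∧ w' ≤ u ∧
    u ≤ b' ∧ b' ≤ c ∧ c ≤ u' ∧ u' ≤ v' ∧ v' ≤ c' := by
  -- derivatives
  have dP : ∀ x, deriv P x = (x - a') + (x - a) := by
    intro x
    rw [funext hP]
    exact (((hasDerivAt_id x).sub_const a).mul
      ((hasDerivAt_id x).sub_const a')).deriv.trans (by simp only [id_eq]; ring)
  have dQ : ∀ x, deriv Q x = (x - b') + (x - b) := by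
    intro x
    rw [funext hQ]
    exact (((hasDerivAt_id x).sub_const b).mul
      ((hasDerivAt_id x).sub_const b')).deriv.trans (by simp only [id_eq]; ring)
  have dR : ∀ x, deriv R x = (x - c') + (x - c) := by
    intro x
    rw [funext hR]
    exact (((hasDerivAt_id x).sub_const c).mul
      ((hasDerivAt_id x).sub_const c')).deriv.trans (by simp only [id_eq]; ring)
  -- factored forms
  have hUf : ∀ x, U x = ((b + b') - (c + c')) * ((x - u) * (x - u')) := by
    have e : ∀ y, U y = ((b + b') - (c + c')) * y ^ 2 + (2 * (c * c' - b * b')) * y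
        + ((c + c') * (b * b') - (b + b') * (c * c')) := by
      intro y; rw [hU y, dQ y, dR y, hQ y, hR y]; ring
    intro x
    rw [e x]
    exact quad_factor _ _ _ u u' (ne_of_lt huu)
      (by rw [← e u]; exact hu) (by rw [← e u']; exact hu') x
  have hVf : ∀ x, V x = ((c + c') - (a + a')) * ((x - v) * (x - v')) := by
    have e : ∀ y, V y = ((c + c') - (a + a')) * y ^ 2 + (2 * (a * a' - c * c')) * y
        + ((a + a') * (c * c') - (c + c') * (a * a')) := by
      intro y; rw [hV y, dR y, dP y, hR y, hP y]; ring
    intro x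
    rw [e x]
    exact quad_factor _ _ _ v v' (ne_of_lt hvv)
      (by rw [← e v]; exact hv) (by rw [← e v']; exact hv') x
  have hWf : ∀ x, W x = ((a + a') - (b + b')) * ((x - w) * (x - w')) := by
    have e : ∀ y, W y = ((a + a') - (b + b')) * y ^ 2 + (2 * (b * b' - a * a')) * y
        + ((b + b') * (a * a') - (a + a') * (b * b')) := by
      intro y; rw [hW y, dP y, dQ y, hP y, hQ y]; ring
    intro x
    rw [e x]
    exact quad_factor _ _ _ w w' (ne_of_lt hww)
      (by rw [← e w]; exact hw) (by rw [← e w']; exact hw') x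
  -- the fundamental identity U*P + V*Q + W*R = 0
  have hsum : ∀ x, U x * ((x - a) * (x - a')) + V x * ((x - b) * (x - b'))
      + W x * ((x - c) * (x - c')) = 0 := by
    intro x
    rw [hU x, hV x, hW x, dP x, dQ x, dR x, hP x, hQ x, hR x]; ring
  have hLU : (b + b') - (c + c') < 0 := by linarith
  have hLV : (0:ℝ) < (c + c') - (a + a') := by linarith
  have hLW : (a + a') - (b + b') < 0 := by linarith
  -- U evaluations
  have EUb : ((b + b') - (c + c')) * ((b - u) * (b - u'))
      = (b - b') * ((b - c) * (b - c')) := by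
    rw [← hUf b, hU b, dQ b, dR b, hQ b, hR b]; ring
  have EUb' : ((b + b') - (c + c')) * ((b' - u) * (b' - u'))
      = (b' - b) * ((b' - c) * (b' - c')) := by
    rw [← hUf b', hU b', dQ b', dR b', hQ b', hR b']; ring
  have EUc : ((b + b') - (c + c')) * ((c - u) * (c - u'))
      = -((c - c') * ((c - b) * (c - b'))) := by
    rw [← hUf c, hU c, dQ c, dR c, hQ c, hR c]; ring
  have EUc' : ((b + b') - (c + c')) * ((c' - u) * (c' - u'))
      = -((c' - c) * ((c' - b) * (c' - b'))) := by
    rw [← hUf c', hU c', dQ c', dR c', hQ c', hR c']; ring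
  -- V evaluations
  have EVa : ((c + c') - (a + a')) * ((a - v) * (a - v'))
      = -((a - a') * ((a - c) * (a - c'))) := by
    rw [← hVf a, hV a, dR a, dP a, hR a, hP a]; ring
  have EVa' : ((c + c') - (a + a')) * ((a' - v) * (a' - v'))
      = -((a' - a) * ((a' - c) * (a' - c'))) := by
    rw [← hVf a', hV a', dR a', dP a', hR a', hP a']; ring
  have EVc : ((c + c') - (a + a')) * ((c - v) * (c - v'))
      = (c - c') * ((c - a) * (c - a')) := by
    rw [← hVf c, hV c, dR c, dP c, hR c, hP c]; ring
  have EVc' : ((c + c') - (a + a')) * ((c' - v) * (c' - v'))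
      = (c' - c) * ((c' - a) * (c' - a')) := by
    rw [← hVf c', hV c', dR c', dP c', hR c', hP c']; ring
  -- W evaluations
  have EWa : ((a + a') - (b + b')) * ((a - w) * (a - w'))
      = (a - a') * ((a - b) * (a - b')) := by
    rw [← hWf a, hW a, dP a, dQ a, hP a, hQ a]; ring
  have EWa' : ((a + a') - (b + b')) * ((a' - w) * (a' - w'))
      = (a' - a) * ((a' - b) * (a' - b')) := by
    rw [← hWf a', hW a', dP a', dQ a', hP a', hQ a']; ring
  have EWb : ((a + a') - (b + b')) * ((b - w) * (b - w'))
      = -((b - b') * ((b - a) * (b - a'))) := by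
    rw [← hWf b, hW b, dP b, dQ b, hP b, hQ b]; ring
  have EWb' : ((a + a') - (b + b')) * ((b' - w) * (b' - w'))
      = -((b' - b) * ((b' - a) * (b' - a'))) := by
    rw [← hWf b', hW b', dP b', dQ b', hP b', hQ b']; ring
  -- sign deductions for U
  have hRb' : (0:ℝ) < (b' - b) * ((b' - c) * (b' - c')) :=
    mul_pos (by linarith) (mul_pos_of_neg_of_neg (by linarith) (by linarith))
  have hpb' : (b' - u) * (b' - u') < 0 := rich_L1 hLU (by rw [EUb']; exact hRb')
  obtain ⟨hub', hb'u'⟩ := rich_R0 huu hpb'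
  have hRb : (b - b') * ((b - c) * (b - c')) < 0 :=
    mul_neg_of_neg_of_pos (by linarith) (mul_pos_of_neg_of_neg (by linarith) (by linarith))
  have hpb : 0 < (b - u) * (b - u') := rich_L2 hLU (by rw [EUb]; exact hRb)
  have hbu : b < u := rich_R3 hpb (by linarith)
  have hRc : (0:ℝ) < -((c - c') * ((c - b) * (c - b'))) := by
    have : (c - c') * ((c - b) * (c - b')) < 0 :=
      mul_neg_of_neg_of_pos (by linarith) (mul_pos (by linarith) (by linarith))
    linarith
  have hpc : (c - u) * (c - u') < 0 := rich_L1 hLU (by rw [EUc]; exact hRc)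
  obtain ⟨huc, hcu'⟩ := rich_R0 huu hpc
  have hRc' : -((c' - c) * ((c' - b) * (c' - b'))) < 0 := by
    have : (0:ℝ) < (c' - c) * ((c' - b) * (c' - b')) :=
      mul_pos (by linarith) (mul_pos (by linarith) (by linarith))
    linarith
  have hpc' : 0 < (c' - u) * (c' - u') := rich_L2 hLU (by rw [EUc']; exact hRc')
  have hu'c' : u' < c' := rich_R4 hpc' (by linarith)
  -- sign deductions for V
  have hRVa' : -((a' - a) * ((a' - c) * (a' - c'))) < 0 := by
    have : (0:ℝ) < (a' - a) * ((a' - c) * (a' - c')) :=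
      mul_pos (by linarith) (mul_pos_of_neg_of_neg (by linarith) (by linarith))
    linarith
  have hpva' : (a' - v) * (a' - v') < 0 := rich_L4 hLV (by rw [EVa']; exact hRVa')
  obtain ⟨hva', ha'v'⟩ := rich_R0 hvv hpva'
  have hRVa : (0:ℝ) < -((a - a') * ((a - c) * (a - c'))) := by
    have : (a - a') * ((a - c) * (a - c')) < 0 :=
      mul_neg_of_neg_of_pos (by linarith) (mul_pos_of_neg_of_neg (by linarith) (by linarith))
    linarith
  have hpva : 0 < (a - v) * (a - v') := rich_L5 hLV (by rw [EVa]; exact hRVa)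
  have hav : a < v := rich_R3 hpva (by linarith)
  have hRVc : (c - c') * ((c - a) * (c - a')) < 0 :=
    mul_neg_of_neg_of_pos (by linarith) (mul_pos (by linarith) (by linarith))
  have hpvc : (c - v) * (c - v') < 0 := rich_L4 hLV (by rw [EVc]; exact hRVc)
  obtain ⟨hvc, hcv'⟩ := rich_R0 hvv hpvc
  have hRVc' : (0:ℝ) < (c' - c) * ((c' - a) * (c' - a')) :=
    mul_pos (by linarith) (mul_pos (by linarith) (by linarith))
  have hpvc' : 0 < (c' - v) * (c' - v') := rich_L5 hLV (by rw [EVc']; exact hRVc')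
  have hv'c' : v' < c' := rich_R4 hpvc' (by linarith)
  -- sign deductions for W
  have hRWa' : (0:ℝ) < (a' - a) * ((a' - b) * (a' - b')) :=
    mul_pos (by linarith) (mul_pos_of_neg_of_neg (by linarith) (by linarith))
  have hpwa' : (a' - w) * (a' - w') < 0 := rich_L1 hLW (by rw [EWa']; exact hRWa')
  obtain ⟨hwa', ha'w'⟩ := rich_R0 hww hpwa'
  have hRWa : (a - a') * ((a - b) * (a - b')) < 0 :=
    mul_neg_of_neg_of_pos (by linarith) (mul_pos_of_neg_of_neg (by linarith) (by linarith))
  have hpwa : 0 < (a - w) * (a - w') := rich_L2 hLW (by rw [EWa]; exact hRWa)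
  have haw : a < w := rich_R3 hpwa (by linarith)
  have hRWb : (0:ℝ) < -((b - b') * ((b - a) * (b - a'))) := by
    have : (b - b') * ((b - a) * (b - a')) < 0 :=
      mul_neg_of_neg_of_pos (by linarith) (mul_pos (by linarith) (by linarith))
    linarith
  have hpwb : (b - w) * (b - w') < 0 := rich_L1 hLW (by rw [EWb]; exact hRWb)
  obtain ⟨hwb, hbw'⟩ := rich_R0 hww hpwb
  have hRWb' : -((b' - b) * ((b' - a) * (b' - a'))) < 0 := by
    have : (0:ℝ) < (b' - b) * ((b' - a) * (b' - a')) :=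
      mul_pos (by linarith) (mul_pos (by linarith) (by linarith))
    linarith
  have hpwb' : 0 < (b' - w) * (b' - w') := rich_L2 hLW (by rw [EWb']; exact hRWb')
  have hw'b' : w' < b' := rich_R4 hpwb' (by linarith)
  -- cross inequality: v ≤ w, using the identity at x = w
  have key1 : U w * ((w - a) * (w - a')) + V w * ((w - b) * (w - b')) = 0 := by
    linear_combination hsum w - ((w - c) * (w - c')) * hw
  have hvw : v ≤ w := by
    have hUwp : 0 < (w - u) * (w - u') :=
      mul_pos_of_neg_of_neg (by linarith) (by linarith)
    have hUw : U w < 0 := by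
      rw [hUf w]; exact mul_neg_of_neg_of_pos hLU hUwp
    have hPw : (w - a) * (w - a') ≤ 0 :=
      rich_L9 (by linarith) (by linarith)
    have hQw : 0 < (w - b) * (w - b') :=
      mul_pos_of_neg_of_neg (by linarith) (by linarith)
    have t1 : 0 ≤ U w * ((w - a) * (w - a')) :=
      rich_L8 (le_of_lt hUw) hPw
    have hVQ : V w * ((w - b) * (w - b')) ≤ 0 := by linarith [key1, t1]
    have hVw : V w ≤ 0 := rich_L7 hQw hVQ
    have hprod : (w - v) * (w - v') ≤ 0 := by
      rw [hVf w] at hVw; exact rich_L6 hLV hVw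
    exact rich_R5 hprod (by linarith)
  -- cross inequality: w' ≤ u, using the identity at x = w'
  have key2 : U w' * ((w' - a) * (w' - a')) + V w' * ((w' - b) * (w' - b')) = 0 := by
    linear_combination hsum w' - ((w' - c) * (w' - c')) * hw'
  have hw'u : w' ≤ u := by
    have hPw' : 0 < (w' - a) * (w' - a') :=
      mul_pos (by linarith) (by linarith)
    have hQw' : (w' - b) * (w' - b') ≤ 0 :=
      rich_L9 (by linarith) (by linarith)
    have hVw'p : (w' - v) * (w' - v') < 0 :=
      mul_neg_of_pos_of_neg (by linarith) (by linarith)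
    have hVw' : V w' < 0 := by
      rw [hVf w']; exact mul_neg_of_pos_of_neg hLV hVw'p
    have t1 : 0 ≤ V w' * ((w' - b) * (w' - b')) :=
      rich_L8 (le_of_lt hVw') hQw'
    have hUP : U w' * ((w' - a) * (w' - a')) ≤ 0 := by linarith [key2, t1]
    have hUw' : U w' ≤ 0 := rich_L7 hPw' hUP
    have hprod : 0 ≤ (w' - u) * (w' - u') := by
      rw [hUf w'] at hUw'; exact rich_L3 hLU hUw'
    exact rich_R6 hprod (by linarith)
  -- cross inequality: u' ≤ v', using the identity at x = u'
  have key3 : V u' * ((u' - b) * (u' - b')) + W u' * ((u' - c) * (u' - c')) = 0 := by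
    linear_combination hsum u' - ((u' - a) * (u' - a')) * hu'
  have hu'v' : u' ≤ v' := by
    have hQu' : 0 < (u' - b) * (u' - b') :=
      mul_pos (by linarith) (by linarith)
    have hRu' : (u' - c) * (u' - c') ≤ 0 :=
      rich_L9 (by linarith) (by linarith)
    have hWu'p : 0 < (u' - w) * (u' - w') :=
      mul_pos (by linarith) (by linarith)
    have hWu' : W u' < 0 := by
      rw [hWf u']; exact mul_neg_of_neg_of_pos hLW hWu'p
    have t1 : 0 ≤ W u' * ((u' - c) * (u' - c')) :=
      rich_L8 (le_of_lt hWu') hRu'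
    have hVQ : V u' * ((u' - b) * (u' - b')) ≤ 0 := by linarith [key3, t1]
    have hVu' : V u' ≤ 0 := rich_L7 hQu' hVQ
    have hprod : (u' - v) * (u' - v') ≤ 0 := by
      rw [hVf u'] at hVu'; exact rich_L6 hLV hVu'
    exact rich_R7 hprod (by linarith)
  exact ⟨le_of_lt hav, hvw, le_of_lt hwa', le_of_lt h2, le_of_lt hbw', hw'u,
    le_of_lt hub', le_of_lt h4, le_of_lt hcu', hu'v', le_of_lt hv'c'⟩
end

section
/- The roots of the Richelot polynomial [Q,R], where Q(x) = (x−b)(x−b') and R(x) = (x−c)(x−c'), are given explicitly by (c c' − b b' ∓ A)/(c + c' − b − b') with A = √((b−c)(b−c')(b'−c)(b'−c')), provided c + c' ≠ b + b'. -/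
/-!
The bracket `[Q, R] = Q'R - R'Q` of two monic quadratics is again a quadratic: its cubic terms
cancel, leaving `-(s x² - 2 (cc' - bb') x + ((b + b') cc' - (c + c') bb'))` with
`s = c + c' - b - b'`.
Its discriminant is `4 (b - c)(b - c')(b' - c)(b' - c') = (2A)²`, so the quadratic formula gives
the two roots `(cc' - bb' ± A) / s`.
-/

theorem deriv_sub_mul_sub {𝕜 : Type*} [NontriviallyNormedField 𝕜] (b b' x : 𝕜) :
    deriv (fun x => (x - b) * (x - b')) x = 2 * x - (b + b') := by
  have h : HasDerivAt (fun y => (y - b) * (y - b')) (1 * (x - b') + (x - b) * 1) x :=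
    ((hasDerivAt_id x).sub_const b).mul ((hasDerivAt_id x).sub_const b')
  rw [h.deriv]
  ring

section Richelot

variable {R : Type*} [CommRing R] (b b' c c' : R)

theorem richelot_bracket_eq_quadratic (x : R) :
    (2 * x - (b + b')) * ((x - c) * (x - c')) - (2 * x - (c + c')) * ((x - b) * (x - b')) =
      -((c + c' - b - b') * (x * x) + -(2 * (c * c' - b * b')) * x +
        ((b + b') * (c * c') - (c + c') * (b * b'))) := by
  ring

theorem discrim_richelot_bracket :
    discrim (c + c' - b - b') (-(2 * (c * c' - b * b')))
        ((b + b') * (c * c') - (c + c') * (b * b')) =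
      4 * ((b - c) * (b - c') * (b' - c) * (b' - c')) := by
  rw [discrim]
  ring

end Richelot

/-- Explicit formula for the roots of the Richelot polynomial `[Q,R]`. -/
theorem richelot_roots_formula (b b' c c' A : ℝ)
    (hA : A ^ 2 = (b - c) * (b - c') * (b' - c) * (b' - c'))
    (hden : c + c' - b - b' ≠ 0)
    (Q R U : ℝ → ℝ)
    (hQ : ∀ x, Q x = (x - b) * (x - b'))
    (hR : ∀ x, R x = (x - c) * (x - c'))
    (hU : ∀ x, U x = deriv Q x * R x - deriv R x * Q x) :
    U ((c * c' - b * b' - A) / (c + c' - b - b')) = 0 ∧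
    U ((c * c' - b * b' + A) / (c + c' - b - b')) = 0 := by
  obtain rfl : Q = fun x => (x - b) * (x - b') := funext hQ
  obtain rfl : R = fun x => (x - c) * (x - c') := funext hR
  have hU_quadratic (x : ℝ) : U x = -((c + c' - b - b') * (x * x) +
      -(2 * (c * c' - b * b')) * x + ((b + b') * (c * c') - (c + c') * (b * b'))) := by
    rw [hU, deriv_sub_mul_sub, deriv_sub_mul_sub, richelot_bracket_eq_quadratic]
  have hdiscrim : discrim (c + c' - b - b') (-(2 * (c * c' - b * b')))
      ((b + b') * (c * c') - (c + c') * (b * b')) = (2 * A) * (2 * A) := by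
    rw [discrim_richelot_bracket, ← hA]
    ring
  have hroot (x : ℝ) h := neg_eq_zero.mpr ((quadratic_eq_zero_iff hden hdiscrim x).mpr h)
  have cancel_two (p : ℝ) : 2 * p / (2 * (c + c' - b - b')) = p / (c + c' - b - b') :=
    mul_div_mul_left _ _ two_ne_zero
  refine ⟨(hU_quadratic _).trans (hroot _ (.inr ?_)), (hU_quadratic _).trans (hroot _ (.inl ?_))⟩
  · rw [neg_neg, ← mul_sub, cancel_two]
  · rw [neg_neg, ← mul_add, cancel_two]
end
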